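/- arXiv:2108.10466 — 3 statements merged into one kernel-verified Lean document; each statement's English description precedes it below -/
import Mathlib

section
/- Let $r \geq 3$ be odd, $q = e^{2\pi i/r}$, and let $n_r = (r-1)/2$ if $r \equiv 1 \pmod 4$ and $n_r = (r-3)/2$ if $r \equiv 3 \pmod 4$. Let $m \in I_r$ be such that the 6-tuple $(n_r, m, m, n_r, m, m)$ is $r$-admissible. Then the sign of the (real-valued) quantum 6j-symbol $\left|\begin{smallmatrix} n_r & m & m \\ n_r & m & m \end{smallmatrix}\right|$ is independent of $m$; moreover, it is positive when $r \equiv 3 \pmod 4$ and negative when $r \equiv 1 \pmod 4$. -/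
open scoped Real
open Complex Finset

noncomputable section

/-- The quantum integer `[n]` at `q = exp(2πi/r)`. -/
def qint (r : ℕ) (n : ℤ) : ℂ :=
  (Complex.exp (2 * Real.pi * Complex.I / r) ^ n -
    Complex.exp (2 * Real.pi * Complex.I / r) ^ (-n)) /
  (Complex.exp (2 * Real.pi * Complex.I / r) -
    (Complex.exp (2 * Real.pi * Complex.I / r))⁻¹)

/-- The quantum factorial `[N]! = ∏_{k=1}^N [k]`, with `[0]! = 1`. -/
def qfact (r N : ℕ) : ℂ := ∏ k ∈ Finset.Icc 1 N, qint r (k : ℤ)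

/-- A triple `(a₁,a₂,a₃)` of elements of `I_r = {0,…,r-2}` is `r`-admissible. -/
def AdmissibleTriple (r a₁ a₂ a₃ : ℕ) : Prop :=
  a₁ ≤ r - 2 ∧ a₂ ≤ r - 2 ∧ a₃ ≤ r - 2 ∧
  Even (a₁ + a₂ + a₃) ∧
  a₁ + a₂ + a₃ ≤ 2 * (r - 2) ∧
  a₃ ≤ a₁ + a₂ ∧ a₂ ≤ a₁ + a₃ ∧ a₁ ≤ a₂ + a₃

/-- A 6-tuple `(a₁,…,a₆)` is `r`-admissible. -/
def Admissible6 (r a₁ a₂ a₃ a₄ a₅ a₆ : ℕ) : Prop :=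
  AdmissibleTriple r a₁ a₂ a₃ ∧ AdmissibleTriple r a₁ a₅ a₆ ∧
  AdmissibleTriple r a₂ a₄ a₆ ∧ AdmissibleTriple r a₃ a₄ a₅

/-- `Δ(a₁,a₂,a₃)`, using the principal complex square root, which realizes the
convention `√y = i√|y|` for negative real `y`. -/
def qdelta (r a₁ a₂ a₃ : ℕ) : ℂ :=
  (qfact r ((a₁ + a₂ - a₃) / 2) * qfact r ((a₁ + a₃ - a₂) / 2) *
      qfact r ((a₂ + a₃ - a₁) / 2) / qfact r ((a₁ + a₂ + a₃) / 2 + 1)) ^ (1 / 2 : ℂ)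

/-- The quantum 6j-symbol `|a₁ a₂ a₃; a₄ a₅ a₆|` at `q = exp(2πi/r)`. -/
def sixj (r a₁ a₂ a₃ a₄ a₅ a₆ : ℕ) : ℂ :=
  Complex.I ^ (-(a₁ + a₂ + a₃ + a₄ + a₅ + a₆ : ℤ)) *
    qdelta r a₁ a₂ a₃ * qdelta r a₁ a₅ a₆ * qdelta r a₂ a₄ a₆ * qdelta r a₃ a₄ a₅ *
    ∑ k ∈ Finset.Icc
        (max (max ((a₁ + a₂ + a₃) / 2) ((a₁ + a₅ + a₆) / 2))
             (max ((a₂ + a₄ + a₆) / 2) ((a₃ + a₄ + a₅) / 2)))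
        (min ((a₁ + a₂ + a₄ + a₅) / 2)
             (min ((a₁ + a₃ + a₄ + a₆) / 2) ((a₂ + a₃ + a₅ + a₆) / 2))),
      ((-1 : ℂ) ^ k * qfact r (k + 1)) /
        (qfact r (k - (a₁ + a₂ + a₃) / 2) * qfact r (k - (a₁ + a₅ + a₆) / 2) *
         qfact r (k - (a₂ + a₄ + a₆) / 2) * qfact r (k - (a₃ + a₄ + a₅) / 2) *
         qfact r ((a₁ + a₂ + a₄ + a₅) / 2 - k) * qfact r ((a₁ + a₃ + a₄ + a₆) / 2 - k) *
         qfact r ((a₂ + a₃ + a₅ + a₆) / 2 - k))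

/-- `n_r = (r-1)/2` if `r ≡ 1 mod 4`, and `n_r = (r-3)/2` if `r ≡ 3 mod 4`. -/
def nr (r : ℕ) : ℕ := if r % 4 = 1 then (r - 1) / 2 else (r - 3) / 2

/-!
For `(n, m, m, n, m, m)` with `n = 2c` all four `Δ`'s equal `Δ(n, m, m)` and the phase
`i^{-(2n+4m)}` is `1`, so the 6j-symbol is `Δ⁴ · S = y² · S` with `y = Δ²` real and nonzero.
Since `[k] = sin(2πk/r) / sin(2π/r)` is positive for `2k < r` and negative for `r < 2k < 2r`,
every term `(-1)^k [k+1]! / (…)` of Racah's sum `S` has sign `(-1)^((r+1)/2)` or vanishes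
(once `[k+1]!` contains `[r] = 0`), and the first term `k = c + m` does not vanish.
-/

def qintR (r : ℕ) (n : ℤ) : ℝ := Real.sin (2 * π * n / r) / Real.sin (2 * π / r)

def qfactR (r N : ℕ) : ℝ := ∏ k ∈ Icc 1 N, qintR r k

theorem exp_zpow_sub_exp_zpow_neg (r : ℕ) (n : ℤ) :
    exp (2 * π * I / r) ^ n - exp (2 * π * I / r) ^ (-n) =
      2 * I * (Real.sin (2 * π * n / r) : ℂ) := by
  rw [← exp_int_mul, ← exp_int_mul, Complex.ofReal_sin]
  have hx : ((-n : ℤ) : ℂ) * (2 * π * I / r) = -((2 * π * n / r : ℝ) : ℂ) * I := by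
    push_cast; ring
  have hy : ((n : ℤ) : ℂ) * (2 * π * I / r) = ((2 * π * n / r : ℝ) : ℂ) * I := by
    push_cast; ring
  rw [hx, hy, exp_mul_I, exp_mul_I, cos_neg, sin_neg]
  ring

theorem qint_eq_ofReal (r : ℕ) (n : ℤ) : qint r n = qintR r n := by
  have hden := exp_zpow_sub_exp_zpow_neg r 1
  rw [zpow_one, zpow_neg_one, Int.cast_one, mul_one] at hden
  rw [qint, exp_zpow_sub_exp_zpow_neg, hden, qintR, Complex.ofReal_div]
  exact mul_div_mul_left _ _ (by simp)

theorem qfact_eq_ofReal (r N : ℕ) : qfact r N = qfactR r N := by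
  simp [qfact, qfactR, qint_eq_ofReal]

section

variable {r : ℕ}

theorem sin_two_pi_div_pos (hr : 3 ≤ r) : 0 < Real.sin (2 * π / r) := by
  have h3 : (3 : ℝ) ≤ r := by exact_mod_cast hr
  apply Real.sin_pos_of_pos_of_lt_pi (by positivity)
  rw [div_lt_iff₀ (by positivity)]
  nlinarith [Real.pi_pos]

theorem qintR_pos (hr : 3 ≤ r) {k : ℕ} (hk₀ : 0 < k) (hk : 2 * k < r) : 0 < qintR r k := by
  have hk₁ : (1 : ℝ) ≤ k := by exact_mod_cast hk₀
  have hk₂ : 2 * (k : ℝ) < r := by exact_mod_cast hk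
  refine div_pos (Real.sin_pos_of_pos_of_lt_pi (by positivity) ?_) (sin_two_pi_div_pos hr)
  rw [Int.cast_natCast, div_lt_iff₀ (by positivity)]
  nlinarith [Real.pi_pos]

theorem qintR_neg (hr : 3 ≤ r) {k : ℕ} (hk₁ : r < 2 * k) (hk₂ : k < r) : qintR r k < 0 := by
  have h₁ : (r : ℝ) < 2 * k := by exact_mod_cast hk₁
  have h₂ : (k : ℝ) < r := by exact_mod_cast hk₂
  have hrpos : (0 : ℝ) < r := by positivity
  refine div_neg_of_neg_of_pos ?_ (sin_two_pi_div_pos hr)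
  have h : 0 < Real.sin (2 * π * k / r - π) := by
    apply Real.sin_pos_of_pos_of_lt_pi
    · rw [sub_pos, lt_div_iff₀ hrpos]
      nlinarith [Real.pi_pos]
    · rw [sub_lt_iff_lt_add, div_lt_iff₀ hrpos]
      nlinarith [Real.pi_pos]
  rw [Real.sin_sub_pi] at h
  rw [Int.cast_natCast]
  exact neg_pos.mp h

theorem qintR_self (hr : 0 < r) : qintR r r = 0 := by
  rw [qintR, Int.cast_natCast, mul_div_assoc, div_self (by positivity), mul_one,
    Real.sin_two_pi, zero_div]

theorem qfactR_pos (hr : 3 ≤ r) {N : ℕ} (hN : 2 * N < r) : 0 < qfactR r N :=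
  prod_pos fun k hk ↦ qintR_pos hr (mem_Icc.mp hk).1 (by grind)

theorem qfactR_eq_zero (hr : 0 < r) {N : ℕ} (hN : r ≤ N) : qfactR r N = 0 :=
  prod_eq_zero (mem_Icc.mpr ⟨hr, hN⟩) (qintR_self hr)

/-- `[k] > 0` for `2k < r` and `[k] < 0` for `r < 2k < 2r`, so the exponent `N - (r-1)/2`
(truncated at `0`) counts the negative factors of `[N]!`. -/
theorem neg_one_pow_sub_mul_qfactR_pos (hr : 3 ≤ r) (hodd : Odd r) {N : ℕ} (hN : N < r) :
    0 < (-1) ^ (N - (r - 1) / 2) * qfactR r N := by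
  have hr2 : r % 2 = 1 := Nat.odd_iff.mp hodd
  induction N with
  | zero => simp [qfactR]
  | succ N ih =>
    rcases Nat.lt_or_ge (2 * (N + 1)) r with hsmall | hlarge
    · rw [Nat.sub_eq_zero_of_le (by omega), pow_zero, one_mul]
      exact qfactR_pos hr hsmall
    · rw [qfactR, prod_Icc_succ_top (by omega), ← qfactR,
        show N + 1 - (r - 1) / 2 = N - (r - 1) / 2 + 1 by omega, pow_succ, mul_neg_one, neg_mul,
        ← mul_neg, ← mul_neg, ← mul_assoc]
      exact mul_pos (ih (by omega)) (neg_pos.mpr (qintR_neg hr (by omega) hN))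

theorem neg_one_pow_add_mul_qfactR_pos (hr : 3 ≤ r) (hodd : Odd r) {N : ℕ}
    (hN₁ : (r - 1) / 2 ≤ N) (hN₂ : N < r) : 0 < (-1) ^ (N + (r - 1) / 2) * qfactR r N := by
  rw [show N + (r - 1) / 2 = N - (r - 1) / 2 + 2 * ((r - 1) / 2) by omega, pow_add, pow_mul,
    neg_one_sq, one_pow, mul_one]
  exact neg_one_pow_sub_mul_qfactR_pos hr hodd hN₂

theorem neg_one_pow_add_mul_qfactR_nonneg (hr : 3 ≤ r) (hodd : Odd r) {N : ℕ}
    (hN : (r - 1) / 2 ≤ N) : 0 ≤ (-1) ^ (N + (r - 1) / 2) * qfactR r N := by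
  rcases Nat.lt_or_ge N r with hlt | hge
  · exact (neg_one_pow_add_mul_qfactR_pos hr hodd hN hlt).le
  · rw [qfactR_eq_zero (by omega) hge, mul_zero]

theorem qfactR_ne_zero (hr : 3 ≤ r) (hodd : Odd r) {N : ℕ} (hN : N < r) : qfactR r N ≠ 0 :=
  right_ne_zero_of_mul (neg_one_pow_sub_mul_qfactR_pos hr hodd hN).ne'

end

def qdeltaSqR (r a₁ a₂ a₃ : ℕ) : ℝ :=
  qfactR r ((a₁ + a₂ - a₃) / 2) * qfactR r ((a₁ + a₃ - a₂) / 2) *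
    qfactR r ((a₂ + a₃ - a₁) / 2) / qfactR r ((a₁ + a₂ + a₃) / 2 + 1)

def sixjSumR (r a₁ a₂ a₃ a₄ a₅ a₆ : ℕ) : ℝ :=
  ∑ k ∈ Icc
      (max (max ((a₁ + a₂ + a₃) / 2) ((a₁ + a₅ + a₆) / 2))
           (max ((a₂ + a₄ + a₆) / 2) ((a₃ + a₄ + a₅) / 2)))
      (min ((a₁ + a₂ + a₄ + a₅) / 2)
           (min ((a₁ + a₃ + a₄ + a₆) / 2) ((a₂ + a₃ + a₅ + a₆) / 2))),
    ((-1) ^ k * qfactR r (k + 1)) /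
      (qfactR r (k - (a₁ + a₂ + a₃) / 2) * qfactR r (k - (a₁ + a₅ + a₆) / 2) *
       qfactR r (k - (a₂ + a₄ + a₆) / 2) * qfactR r (k - (a₃ + a₄ + a₅) / 2) *
       qfactR r ((a₁ + a₂ + a₄ + a₅) / 2 - k) * qfactR r ((a₁ + a₃ + a₄ + a₆) / 2 - k) *
       qfactR r ((a₂ + a₃ + a₅ + a₆) / 2 - k))

theorem qdelta_eq_cpow (r a₁ a₂ a₃ : ℕ) :
    qdelta r a₁ a₂ a₃ = (qdeltaSqR r a₁ a₂ a₃ : ℂ) ^ (1 / 2 : ℂ) := by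
  simp [qdelta, qdeltaSqR, qfact_eq_ofReal]

theorem qdelta_comm (r a₁ a₂ a₃ : ℕ) : qdelta r a₂ a₁ a₃ = qdelta r a₁ a₂ a₃ := by
  simp only [qdelta_eq_cpow, qdeltaSqR, add_comm a₂ a₁]
  ring_nf

theorem sixj_eq_ofReal (r a₁ a₂ a₃ a₄ a₅ a₆ : ℕ) :
    sixj r a₁ a₂ a₃ a₄ a₅ a₆ =
      I ^ (-(a₁ + a₂ + a₃ + a₄ + a₅ + a₆ : ℤ)) *
        qdelta r a₁ a₂ a₃ * qdelta r a₁ a₅ a₆ * qdelta r a₂ a₄ a₆ * qdelta r a₃ a₄ a₅ *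
        sixjSumR r a₁ a₂ a₃ a₄ a₅ a₆ := by
  simp [sixj, sixjSumR, qfact_eq_ofReal]

theorem sixj_two_mul_eq_ofReal (r c m : ℕ) :
    sixj r (2 * c) m m (2 * c) m m =
      ((qdeltaSqR r (2 * c) m m ^ 2 * sixjSumR r (2 * c) m m (2 * c) m m : ℝ) : ℂ) := by
  have hI : I ^ (-((2 * c : ℕ) + m + m + (2 * c : ℕ) + m + m : ℤ)) = 1 := by
    rw [show -((2 * c : ℕ) + m + m + (2 * c : ℕ) + m + m : ℤ) = 4 * -(c + m : ℤ) by
      push_cast; ring, zpow_mul, show I ^ (4 : ℤ) = 1 from I_pow_four, one_zpow]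
  set y := qdeltaSqR r (2 * c) m m
  have hsq : ((y : ℂ) ^ (1 / 2 : ℂ)) ^ 2 = y := by rw [one_div, cpow_ofNat_inv_pow]
  rw [sixj_eq_ofReal, hI, qdelta_comm r (2 * c), qdelta_eq_cpow]
  push_cast
  linear_combination
    (((y : ℂ) ^ (1 / 2 : ℂ)) ^ 2 + y) * (sixjSumR r (2 * c) m m (2 * c) m m : ℂ) * hsq

section

variable {r : ℕ}

theorem neg_one_pow_mul_racah_term_nonneg (hr : 3 ≤ r) (hodd : Odd r) {k : ℕ}
    (hk : (r - 1) / 2 ≤ k + 1) {D : ℝ} (hD : 0 < D) :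
    0 ≤ (-1) ^ ((r + 1) / 2) * ((-1) ^ k * qfactR r (k + 1) / D) := by
  have hr2 := Nat.odd_iff.mp hodd
  rw [← mul_div_assoc, ← mul_assoc, ← pow_add,
    show (r + 1) / 2 + k = k + 1 + (r - 1) / 2 by omega]
  exact div_nonneg (neg_one_pow_add_mul_qfactR_nonneg hr hodd hk) hD.le

theorem neg_one_pow_mul_racah_term_pos (hr : 3 ≤ r) (hodd : Odd r) {k : ℕ}
    (hk₁ : (r - 1) / 2 ≤ k + 1) (hk₂ : k + 1 < r) {D : ℝ} (hD : 0 < D) :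
    0 < (-1) ^ ((r + 1) / 2) * ((-1) ^ k * qfactR r (k + 1) / D) := by
  have hr2 := Nat.odd_iff.mp hodd
  rw [← mul_div_assoc, ← mul_assoc, ← pow_add,
    show (r + 1) / 2 + k = k + 1 + (r - 1) / 2 by omega]
  exact div_pos (neg_one_pow_add_mul_qfactR_pos hr hodd hk₁ hk₂) hD

variable {c m : ℕ}

theorem neg_one_pow_mul_sixjSumR_pos (hr : 3 ≤ r) (hodd : Odd r) (hc : r ≤ 4 * c + 3)
    (hcm : c ≤ m) (hcmr : c + m + 2 ≤ r) :
    0 < (-1) ^ ((r + 1) / 2) * sixjSumR r (2 * c) m m (2 * c) m m := by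
  have hT₁ : (2 * c + m + m) / 2 = c + m := by omega
  have hT₂ : (m + 2 * c + m) / 2 = c + m := by omega
  have hQ₁ : (2 * c + m + 2 * c + m) / 2 = 2 * c + m := by omega
  have hQ₃ : (m + m + m + m) / 2 = 2 * m := by omega
  simp only [sixjSumR, hT₁, hT₂, hQ₁, hQ₃, max_self, ← min_assoc, min_self, mul_sum]
  have hD : ∀ k ∈ Icc (c + m) (min (2 * c + m) (2 * m)), 0 <
      qfactR r (k - (c + m)) * qfactR r (k - (c + m)) * qfactR r (k - (c + m)) *
        qfactR r (k - (c + m)) * qfactR r (2 * c + m - k) * qfactR r (2 * c + m - k) *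
        qfactR r (2 * m - k) := by
    intro k hk
    have := mem_Icc.mp hk
    have h₁ := qfactR_pos hr (N := k - (c + m)) (by omega)
    have h₂ := qfactR_pos hr (N := 2 * c + m - k) (by omega)
    have h₃ := qfactR_pos hr (N := 2 * m - k) (by omega)
    positivity
  have hcm_mem : c + m ∈ Icc (c + m) (min (2 * c + m) (2 * m)) := by simp; omega
  refine sum_pos' (fun k hk ↦ ?_) ⟨c + m, hcm_mem, ?_⟩
  · exact neg_one_pow_mul_racah_term_nonneg hr hodd (by grind) (hD k hk)
  · exact neg_one_pow_mul_racah_term_pos hr hodd (by omega) (by omega) (hD _ hcm_mem)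

theorem qdeltaSqR_ne_zero (hr : 3 ≤ r) (hodd : Odd r) (hc : r ≤ 4 * c + 3)
    (hcm : c ≤ m) (hcmr : c + m + 2 ≤ r) : qdeltaSqR r (2 * c) m m ≠ 0 := by
  rw [qdeltaSqR, show (2 * c + m - m) / 2 = c by omega,
    show (m + m - 2 * c) / 2 = m - c by omega, show (2 * c + m + m) / 2 + 1 = c + m + 1 by omega]
  have h₁ := qfactR_pos hr (N := c) (by omega)
  have h₂ := qfactR_pos hr (N := m - c) (by omega)
  exact div_ne_zero (by positivity) (qfactR_ne_zero hr hodd (by omega))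

end

theorem exists_nr_eq_two_mul {r : ℕ} (hodd : Odd r) : ∃ c, nr r = 2 * c ∧ r ≤ 4 * c + 3 := by
  have hr2 := Nat.odd_iff.mp hodd
  unfold nr
  split_ifs with h
  · exact ⟨(r - 1) / 4, by omega, by omega⟩
  · exact ⟨(r - 3) / 4, by omega, by omega⟩

theorem sign_sixj_nr_m (r : ℕ) (hr : 3 ≤ r) (hodd : Odd r) (m : ℕ)
    (hadm : Admissible6 r (nr r) m m (nr r) m m) :
    (sixj r (nr r) m m (nr r) m m).im = 0 ∧
    (r % 4 = 3 → 0 < (sixj r (nr r) m m (nr r) m m).re) ∧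
    (r % 4 = 1 → (sixj r (nr r) m m (nr r) m m).re < 0) := by
  obtain ⟨c, hnr, hc⟩ := exists_nr_eq_two_mul hodd
  obtain ⟨⟨-, -, -, -, hsum, -, -, hnm⟩, -⟩ := hadm
  rw [hnr] at hsum hnm ⊢
  have hS := neg_one_pow_mul_sixjSumR_pos hr hodd hc (m := m) (by omega) (by omega)
  have hΔ := sq_pos_of_ne_zero (qdeltaSqR_ne_zero hr hodd hc (m := m) (by omega) (by omega))
  rw [sixj_two_mul_eq_ofReal, ofReal_re, ofReal_im]
  refine ⟨rfl, fun h3 ↦ ?_, fun h1 ↦ ?_⟩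
  · rw [Even.neg_one_pow (by grind), one_mul] at hS
    positivity
  · rw [Odd.neg_one_pow (by grind), neg_one_mul, neg_pos] at hS
    exact mul_neg_of_pos_of_neg hΔ hS
end
end

section
/- Let $r \geq 3$ be odd, $q = e^{2\pi i/r}$, and let $n_r = (r-1)/2$ if $r \equiv 1 \pmod 4$ and $n_r = (r-3)/2$ if $r \equiv 3 \pmod 4$. Suppose $m_1, m_2, m_3, m_4 \in I_r$ are such that the 6-tuple $(n_r, m_1, m_2, n_r, m_3, m_4)$ is $r$-admissible. Then the coefficient $(\sqrt{-1})^{-(2n_r + m_1+m_2+m_3+m_4)}\, \Delta(n_r,m_1,m_2)\, \Delta(n_r,m_3,m_4)\, \Delta(m_1,n_r,m_4)\, \Delta(m_2,n_r,m_3)$ is a real number. -/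
/-!
At `q = exp(2πi/r)` the quantum integer `[k] = sin(2πk/r) / sin(2π/r)` is real, positive for
`1 ≤ k ≤ (r-1)/2` and negative for `(r+1)/2 ≤ k ≤ r-1`. Hence every `Δ(a,b,c)` is a real multiple
of `i^K`, where `K` counts the negative factors in its radicand. When one entry `n` satisfies
`2n + 1 = r` or `2n + 3 = r`, as `n_r` does, only the denominator `[(a+b+c)/2 + 1]!` has
negative factors, namely `(a+b+c)/2 + 1 - (r-1)/2` of them. Over the four triples the half-sums
`(a+b+c)/2` add up to `2n_r + m₁ + m₂ + m₃ + m₄`, which the prefactor cancels, leaving the even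
power `i^(4 - 4(r-1)/2)` times a real number.
-/

open scoped Real
open Complex Finset

noncomputable section

lemma qint_eq_sin_div_sin (r : ℕ) (n : ℤ) :
    qint r n = ((Real.sin (2 * π * n / r) / Real.sin (2 * π / r) : ℝ) : ℂ) := by
  have key : ∀ m : ℤ, Complex.exp (2 * π * I / r) ^ m - Complex.exp (2 * π * I / r) ^ (-m)
      = 2 * I * (Real.sin (2 * π * m / r) : ℂ) := by
    intro m
    rw [← Complex.exp_int_mul, ← Complex.exp_int_mul,
      show ((m : ℂ) * (2 * π * I / r)) = ((2 * π * m / r : ℝ) : ℂ) * I by push_cast; ring,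
      show (((-m : ℤ) : ℂ) * (2 * π * I / r)) = ((-(2 * π * m / r) : ℝ) : ℂ) * I by
        push_cast; ring,
      Complex.exp_mul_I, Complex.exp_mul_I]
    push_cast
    rw [Complex.cos_neg, Complex.sin_neg]
    ring
  have hden := key 1
  rw [zpow_one, zpow_neg_one] at hden
  rw [qint, key, hden, Int.cast_one, mul_one, Complex.ofReal_div]
  rcases eq_or_ne (Real.sin (2 * π / r)) 0 with h | h
  · simp [h]
  · field_simp

lemma sin_two_pi_mul_div_pos {r k : ℕ} (hk : 1 ≤ k) (hkr : 2 * k < r) :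
    0 < Real.sin (2 * π * k / r) := by
  have hr : (0 : ℝ) < r := by norm_cast; omega
  apply Real.sin_pos_of_pos_of_lt_pi (by positivity)
  rw [div_lt_iff₀ hr]
  nlinarith [Real.pi_pos, show (2 * k : ℝ) < r by exact_mod_cast hkr]

lemma sin_two_pi_mul_div_neg {r k : ℕ} (hrk : r < 2 * k) (hkr : k < r) :
    Real.sin (2 * π * k / r) < 0 := by
  have hr : (0 : ℝ) < r := by norm_cast; omega
  rw [← Real.sin_sub_two_pi]
  apply Real.sin_neg_of_neg_of_neg_pi_lt
  · rw [sub_neg, div_lt_iff₀ hr]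
    nlinarith [Real.pi_pos, show (k : ℝ) < r by exact_mod_cast hkr]
  · rw [lt_sub_iff_add_lt, lt_div_iff₀ hr]
    nlinarith [Real.pi_pos, show (r : ℝ) < 2 * k by exact_mod_cast hrk]

lemma exists_qfact_eq_neg_one_pow_mul {r : ℕ} (hr : 3 ≤ r) (hodd : Odd r) {N : ℕ}
    (hN : N ≤ r - 1) : ∃ t : ℝ, 0 < t ∧ qfact r N = (((-1) ^ (N - (r - 1) / 2) * t : ℝ) : ℂ) := by
  have hr2 : r % 2 = 1 := Nat.odd_iff.mp hodd
  induction N with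
  | zero => exact ⟨1, one_pos, by simp [qfact]⟩
  | succ N ih =>
    obtain ⟨t, ht, hqf⟩ := ih (by omega)
    set s := Real.sin (2 * π * ↑(N + 1) / r) / Real.sin (2 * π / r)
    have hsin1 : 0 < Real.sin (2 * π / r) := by
      simpa using sin_two_pi_mul_div_pos (r := r) (k := 1) le_rfl (by omega)
    have hq : qint r (N + 1 : ℕ) = s := by rw [qint_eq_sin_div_sin, Int.cast_natCast]
    have hstep : qfact r (N + 1) = (((-1) ^ (N - (r - 1) / 2) * t * s : ℝ) : ℂ) := by
      rw [qfact, Finset.prod_Icc_succ_top (by omega), ← qfact, hqf, hq, ← Complex.ofReal_mul]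
    rcases Nat.lt_or_gt_of_ne (show 2 * (N + 1) ≠ r by omega) with hlt | hgt
    · refine ⟨t * s, mul_pos ht (div_pos (sin_two_pi_mul_div_pos (by omega) hlt) hsin1), ?_⟩
      rw [hstep, show N + 1 - (r - 1) / 2 = N - (r - 1) / 2 by omega]
      ring_nf
    · refine ⟨t * -s, mul_pos ht (neg_pos.2 (div_neg_of_neg_of_pos
        (sin_two_pi_mul_div_neg hgt (by omega)) hsin1)), ?_⟩
      rw [hstep, show N + 1 - (r - 1) / 2 = N - (r - 1) / 2 + 1 by omega, pow_succ]
      ring_nf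

def IsRealMulIZpow (k : ℤ) (z : ℂ) : Prop := ∃ s : ℝ, z = I ^ k * s

lemma I_zpow_two_mul (m : ℤ) : I ^ (2 * m) = (((-1) ^ m : ℝ) : ℂ) := by
  rw [zpow_mul, zpow_two, I_mul_I]
  push_cast
  rfl

lemma isRealMulIZpow_I_zpow (k : ℤ) : IsRealMulIZpow k (I ^ k) := ⟨1, by simp⟩

namespace IsRealMulIZpow

variable {k l : ℤ} {z w : ℂ}

lemma mul (hz : IsRealMulIZpow k z) (hw : IsRealMulIZpow l w) :
    IsRealMulIZpow (k + l) (z * w) := by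
  obtain ⟨s, rfl⟩ := hz
  obtain ⟨u, rfl⟩ := hw
  exact ⟨s * u, by rw [zpow_add₀ I_ne_zero]; push_cast; ring⟩

lemma add_two_mul (hz : IsRealMulIZpow k z) (m : ℤ) : IsRealMulIZpow (k + 2 * m) z := by
  obtain ⟨s, rfl⟩ := hz
  refine ⟨(-1) ^ m * s, ?_⟩
  have hsq : ((-1 : ℝ) ^ m) * (-1) ^ m = 1 := by
    rw [← zpow_add₀ (by norm_num), ← two_mul, (even_two_mul m).neg_one_zpow]
  rw [zpow_add₀ I_ne_zero, I_zpow_two_mul, mul_assoc, ← Complex.ofReal_mul, ← mul_assoc, hsq,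
    one_mul]

lemma im_eq_zero_of_even (hz : IsRealMulIZpow k z) (hk : Even k) : z.im = 0 := by
  obtain ⟨m, rfl⟩ := hk
  obtain ⟨s, hs⟩ := hz.add_two_mul (-m)
  rw [hs, show m + m + 2 * -m = 0 by ring, zpow_zero, one_mul, Complex.ofReal_im]

end IsRealMulIZpow

lemma isRealMulIZpow_cpow_half (K : ℕ) {t : ℝ} (ht : 0 ≤ t) :
    IsRealMulIZpow K ((((-1) ^ K * t : ℝ) : ℂ) ^ (1 / 2 : ℂ)) := by
  have hsqrt : ((t : ℂ) ^ (1 / 2 : ℂ)) = (√t : ℂ) := by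
    rw [Real.sqrt_eq_rpow, Complex.ofReal_cpow ht]
    norm_num
  obtain ⟨m, rfl | rfl⟩ := Nat.even_or_odd' K
  · have h0 : IsRealMulIZpow 0 ((((-1) ^ (2 * m) * t : ℝ) : ℂ) ^ (1 / 2 : ℂ)) :=
      ⟨√t, by rw [pow_mul, neg_one_sq, one_pow, one_mul, hsqrt, zpow_zero, one_mul]⟩
    simpa using h0.add_two_mul m
  · have h1 : IsRealMulIZpow 1 ((((-1) ^ (2 * m + 1) * t : ℝ) : ℂ) ^ (1 / 2 : ℂ)) := by
      refine ⟨√t, ?_⟩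
      rw [pow_succ, pow_mul, neg_one_sq, one_pow, one_mul, neg_one_mul,
        Complex.ofReal_cpow_of_nonpos (by linarith), Complex.ofReal_neg, neg_neg, hsqrt,
        show (π : ℂ) * I * (1 / 2) = π / 2 * I by ring, Complex.exp_pi_div_two_mul_I, zpow_one,
        mul_comm]
    simpa [add_comm] using h1.add_two_mul m

lemma AdmissibleTriple.swap {r a b c : ℕ} (h : AdmissibleTriple r a b c) :
    AdmissibleTriple r b a c := by
  obtain ⟨ha, hb, hc, heven, hsum, hab, hac, hbc⟩ := h
  exact ⟨hb, ha, hc, by rwa [add_comm b a], by omega, by omega, by omega, by omega⟩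

lemma qdelta_swap (r a b c : ℕ) : qdelta r a b c = qdelta r b a c := by
  rw [qdelta, qdelta, add_comm b a, mul_right_comm (qfact r ((a + b - c) / 2))]

lemma isRealMulIZpow_qdelta {r a b c : ℕ} (hr : 3 ≤ r) (hodd : Odd r)
    (h : AdmissibleTriple r a b c) :
    IsRealMulIZpow ((a + b - c) / 2 - (r - 1) / 2 + ((a + c - b) / 2 - (r - 1) / 2) +
      ((b + c - a) / 2 - (r - 1) / 2) + ((a + b + c) / 2 + 1 - (r - 1) / 2) : ℕ)
      (qdelta r a b c) := by
  obtain ⟨ha, hb, hc, -, hsum, -, -, -⟩ := h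
  obtain ⟨t₁, ht₁, e₁⟩ := exists_qfact_eq_neg_one_pow_mul hr hodd (N := (a + b - c) / 2) (by omega)
  obtain ⟨t₂, ht₂, e₂⟩ := exists_qfact_eq_neg_one_pow_mul hr hodd (N := (a + c - b) / 2) (by omega)
  obtain ⟨t₃, ht₃, e₃⟩ := exists_qfact_eq_neg_one_pow_mul hr hodd (N := (b + c - a) / 2) (by omega)
  obtain ⟨t₄, ht₄, e₄⟩ :=
    exists_qfact_eq_neg_one_pow_mul hr hodd (N := (a + b + c) / 2 + 1) (by omega)
  convert isRealMulIZpow_cpow_half _ (div_nonneg (mul_pos (mul_pos ht₁ ht₂) ht₃).le ht₄.le)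
    using 2
  rw [qdelta]
  congr 1
  rw [e₁, e₂, e₃, e₄, pow_add, pow_add, pow_add]
  push_cast
  have hsign : ((-1 : ℂ) ^ ((a + b + c) / 2 + 1 - (r - 1) / 2))⁻¹ =
      (-1) ^ ((a + b + c) / 2 + 1 - (r - 1) / 2) := by
    rw [← inv_pow, inv_neg, inv_one]
  rw [div_eq_mul_inv, div_eq_mul_inv, mul_inv, hsign]
  ring

lemma isRealMulIZpow_qdelta_of_two_mul_add {r n b c : ℕ} (hr : 3 ≤ r) (hodd : Odd r)
    (hn : 2 * n + 1 = r ∨ 2 * n + 3 = r) (h : AdmissibleTriple r n b c) :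
    IsRealMulIZpow ((n + b + c) / 2 + 1 - (r - 1) / 2 : ℕ) (qdelta r n b c) := by
  convert isRealMulIZpow_qdelta hr hodd h using 2
  obtain ⟨-, hb, hc, -, hsum, hnb, hnc, hbc⟩ := h
  omega

lemma two_mul_nr_add {r : ℕ} (hodd : Odd r) : 2 * nr r + 1 = r ∨ 2 * nr r + 3 = r := by
  have := Nat.odd_iff.mp hodd
  unfold nr
  split <;> omega

theorem coefficient_real (r : ℕ) (hr : 3 ≤ r) (hodd : Odd r) (m₁ m₂ m₃ m₄ : ℕ)
    (hadm : Admissible6 r (nr r) m₁ m₂ (nr r) m₃ m₄) :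
    (Complex.I ^ (-(2 * (nr r : ℤ) + m₁ + m₂ + m₃ + m₄)) *
      (qdelta r (nr r) m₁ m₂ * qdelta r (nr r) m₃ m₄ *
       qdelta r m₁ (nr r) m₄ * qdelta r m₂ (nr r) m₃)).im = 0 := by
  obtain ⟨h₁, h₂, h₃, h₄⟩ := hadm
  have hn := two_mul_nr_add hodd
  rw [qdelta_swap r m₁, qdelta_swap r m₂]
  have hphase := ((((isRealMulIZpow_qdelta_of_two_mul_add hr hodd hn h₁).mul
    (isRealMulIZpow_qdelta_of_two_mul_add hr hodd hn h₂)).mul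
    (isRealMulIZpow_qdelta_of_two_mul_add hr hodd hn h₃.swap)).mul
    (isRealMulIZpow_qdelta_of_two_mul_add hr hodd hn h₄.swap))
  refine ((isRealMulIZpow_I_zpow _).mul hphase).im_eq_zero_of_even ?_
  obtain ⟨-, -, -, e₁, -, -, -, t₁⟩ := h₁
  obtain ⟨-, -, -, e₂, -, -, -, t₂⟩ := h₂
  obtain ⟨-, -, -, e₃, -, -, t₃, -⟩ := h₃
  obtain ⟨-, -, -, e₄, -, -, t₄, -⟩ := h₄
  rw [Nat.even_iff] at e₁ e₂ e₃ e₄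
  rw [Int.even_iff]
  omega
end
end

section
/- Let $r \geq 5$ be odd, $q = e^{2\pi i/r}$, and let $n_r = (r-1)/2$ if $r \equiv 1 \pmod 4$ and $n_r = (r-3)/2$ if $r \equiv 3 \pmod 4$. Let $m$ be an integer with $n_r/2 < m < r-2-n_r/2$. Then the real number $S = \dfrac{(-1)^{m+n_r/2}\, [m + n_r/2 + 1]!}{[n_r/2]!^2\, [m - n_r/2]!}$ satisfies $(-1)^{(r-3)/2}\, S > 0$; in particular the sign of $S$ is independent of $m$. -/
open scoped Real
open Complex Finset

noncomputable section

lemma sin_r_pos {r : ℕ} (hr : 3 ≤ r) : 0 < Real.sin (2 * Real.pi / r) := by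
  have hrpos : (0:ℝ) < r := by exact_mod_cast (by omega : 0 < r)
  apply Real.sin_pos_of_pos_of_lt_pi
  · positivity
  · rw [div_lt_iff₀ hrpos]
    have : (3:ℝ) ≤ r := by exact_mod_cast hr
    nlinarith [Real.pi_pos]

lemma exp_sub_inv (a : ℝ) :
    Complex.exp (↑a * Complex.I) - (Complex.exp (↑a * Complex.I))⁻¹
      = 2 * (Real.sin a : ℂ) * Complex.I := by
  rw [← Complex.exp_neg, ← neg_mul, Complex.exp_mul_I, Complex.exp_mul_I]
  rw [Complex.cos_neg, Complex.sin_neg, ← Complex.ofReal_sin]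
  ring

lemma qint_eq {r : ℕ} (hr : 3 ≤ r) (n : ℤ) :
    qint r n = ((Real.sin (2 * Real.pi * n / r) / Real.sin (2 * Real.pi / r) : ℝ) : ℂ) := by
  have hr0 : (r : ℂ) ≠ 0 := by exact_mod_cast (by omega : r ≠ 0)
  have hr0' : (r : ℝ) ≠ 0 := by exact_mod_cast (by omega : r ≠ 0)
  have harg : 2 * Real.pi * Complex.I / r = ((2 * Real.pi / r : ℝ) : ℂ) * Complex.I := by
    push_cast; ring
  have hzpow : ∀ k : ℤ, Complex.exp (((2 * Real.pi / r : ℝ) : ℂ) * Complex.I) ^ k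
      = Complex.exp (((2 * Real.pi * k / r : ℝ) : ℂ) * Complex.I) := by
    intro k
    rw [← Complex.exp_int_mul]
    congr 1
    push_cast; ring
  have hsin := sin_r_pos hr
  unfold qint
  rw [harg, hzpow, hzpow]
  have hneg : ((2 * Real.pi * (-n : ℤ) / r : ℝ) : ℂ) = ((-(2 * Real.pi * n / r) : ℝ) : ℂ) := by
    push_cast; ring
  rw [hneg]
  have h1 := exp_sub_inv (2 * Real.pi * n / r)
  rw [← Complex.exp_neg, ← neg_mul, ← Complex.ofReal_neg] at h1
  rw [h1, exp_sub_inv]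
  have hI := Complex.I_ne_zero
  have hs2 : ((Real.sin (2 * Real.pi / r) : ℝ) : ℂ) ≠ 0 := by exact_mod_cast hsin.ne'
  field_simp
  have h2I : (2:ℂ) * Complex.I ≠ 0 := by simp [Complex.I_ne_zero]
  rw [← Complex.ofReal_mul, mul_div_assoc', mul_div_cancel_left₀ _ hsin.ne']

/-- Real version of the quantum factorial. -/
def qfR (r N : ℕ) : ℝ :=
  ∏ k ∈ Finset.Icc 1 N, Real.sin (2 * Real.pi * k / r) / Real.sin (2 * Real.pi / r)

lemma qfact_eq {r : ℕ} (hr : 3 ≤ r) (N : ℕ) : qfact r N = ((qfR r N : ℝ) : ℂ) := by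
  unfold qfact qfR
  rw [Complex.ofReal_prod]
  refine Finset.prod_congr rfl fun k _ => ?_
  rw [qint_eq hr (k : ℤ)]
  norm_num

lemma f_pos {r k : ℕ} (hr : 3 ≤ r) (hk1 : 1 ≤ k) (hk2 : 2 * k < r) :
    0 < Real.sin (2 * Real.pi * k / r) / Real.sin (2 * Real.pi / r) := by
  have hrpos : (0:ℝ) < r := by exact_mod_cast (by omega : 0 < r)
  have hkpos : (0:ℝ) < k := by exact_mod_cast hk1
  have hk2' : (2 * k : ℝ) < r := by exact_mod_cast hk2
  apply div_pos _ (sin_r_pos hr)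
  apply Real.sin_pos_of_pos_of_lt_pi
  · positivity
  · rw [div_lt_iff₀ hrpos]
    nlinarith [Real.pi_pos]

lemma f_neg {r k : ℕ} (hr : 3 ≤ r) (hk1 : r < 2 * k) (hk2 : k < r) :
    Real.sin (2 * Real.pi * k / r) / Real.sin (2 * Real.pi / r) < 0 := by
  have hrpos : (0:ℝ) < r := by exact_mod_cast (by omega : 0 < r)
  have hk1' : (r : ℝ) < 2 * k := by exact_mod_cast hk1
  have hk2' : (k : ℝ) < r := by exact_mod_cast hk2
  apply div_neg_of_neg_of_pos _ (sin_r_pos hr)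
  have h1 : 0 < 2 * Real.pi * k / r - Real.pi := by
    rw [sub_pos, lt_div_iff₀ hrpos]
    nlinarith [Real.pi_pos]
  have h2 : 2 * Real.pi * k / r - Real.pi < Real.pi := by
    rw [sub_lt_iff_lt_add, div_lt_iff₀ hrpos]
    nlinarith [Real.pi_pos]
  have := Real.sin_pos_of_pos_of_lt_pi h1 h2
  rwa [Real.sin_sub_pi, neg_pos] at this

lemma qfR_pos {r N : ℕ} (hr : 3 ≤ r) (hN : 2 * N < r) : 0 < qfR r N := by
  apply Finset.prod_pos
  intro k hk
  rw [Finset.mem_Icc] at hk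
  exact f_pos hr hk.1 (by omega)

lemma qfR_sign {r : ℕ} (hr : 3 ≤ r) (hodd : r % 2 = 1) :
    ∀ j, (r - 1) / 2 + j ≤ r - 1 → 0 < (-1 : ℝ) ^ j * qfR r ((r - 1) / 2 + j) := by
  intro j
  induction j with
  | zero =>
    intro _
    simpa using qfR_pos hr (by omega)
  | succ j ih =>
    intro hle
    have ih' := ih (by omega)
    have hstep : qfR r ((r - 1) / 2 + (j + 1))
        = qfR r ((r - 1) / 2 + j) * (Real.sin (2 * Real.pi * (((r - 1) / 2 + j + 1 : ℕ) : ℝ) / r)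
            / Real.sin (2 * Real.pi / r)) := by
      have h : (r - 1) / 2 + (j + 1) = ((r - 1) / 2 + j) + 1 := by omega
      rw [h]
      simp only [qfR]
      exact Finset.prod_Icc_succ_top (by omega : 1 ≤ (r - 1) / 2 + j + 1) _
    have hf : Real.sin (2 * Real.pi * (((r - 1) / 2 + j + 1 : ℕ) : ℝ) / r)
        / Real.sin (2 * Real.pi / r) < 0 :=
      f_neg hr (by omega) (by omega)
    rw [hstep, pow_succ]
    nlinarith [mul_pos ih' (neg_pos.mpr hf)]


theorem term_sign_independent (r : ℕ) (hr : 5 ≤ r) (hodd : Odd r) (m : ℕ)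
    (h₁ : nr r / 2 < m) (h₂ : m < r - 2 - nr r / 2) :
    (((-1 : ℂ) ^ (m + nr r / 2) * qfact r (m + nr r / 2 + 1)) /
        (qfact r (nr r / 2) ^ 2 * qfact r (m - nr r / 2))).im = 0 ∧
    0 < (-1 : ℝ) ^ ((r - 3) / 2) *
      (((-1 : ℂ) ^ (m + nr r / 2) * qfact r (m + nr r / 2 + 1)) /
        (qfact r (nr r / 2) ^ 2 * qfact r (m - nr r / 2))).re := by
  have hr2 : r % 2 = 1 := Nat.odd_iff.mp hodd
  have hr3 : 3 ≤ r := by omega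
  have hnr : nr r = (r - 1) / 2 ∧ r % 4 = 1 ∨ nr r = (r - 3) / 2 ∧ r % 4 = 3 := by
    unfold nr
    split_ifs with h
    · exact Or.inl ⟨rfl, h⟩
    · exact Or.inr ⟨rfl, by omega⟩
  set nn := nr r / 2 with hnn
  set j := m + nn + 1 - (r - 1) / 2 with hjdef
  -- rewrite everything as real
  have hkey : (((-1 : ℂ) ^ (m + nn) * qfact r (m + nn + 1)) /
      (qfact r nn ^ 2 * qfact r (m - nn)))
      = ((((-1 : ℝ) ^ (m + nn) * qfR r (m + nn + 1)) /
          (qfR r nn ^ 2 * qfR r (m - nn)) : ℝ) : ℂ) := by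
    rw [qfact_eq hr3, qfact_eq hr3, qfact_eq hr3]
    push_cast
    ring
  rw [hkey, Complex.ofReal_im, Complex.ofReal_re]
  refine ⟨rfl, ?_⟩
  -- positivity facts
  have hPn : 0 < qfR r nn := qfR_pos hr3 (by omega)
  have hPmn : 0 < qfR r (m - nn) := qfR_pos hr3 (by omega)
  have hN1 : m + nn + 1 = (r - 1) / 2 + j := by omega
  have hs : 0 < (-1 : ℝ) ^ j * qfR r (m + nn + 1) := by
    rw [hN1]; exact qfR_sign hr3 hr2 j (by omega)
  have heven : Even ((r - 3) / 2 + (m + nn) + j) := by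
    rw [Nat.even_iff]; omega
  have hone : ((-1 : ℝ)) ^ ((r - 3) / 2) * (-1) ^ (m + nn) * (-1) ^ j = 1 := by
    rw [← pow_add, ← pow_add]
    exact Even.neg_one_pow heven
  have htrick : (-1 : ℝ) ^ j * ((-1 : ℝ) ^ j * qfR r (m + nn + 1)) = qfR r (m + nn + 1) := by
    rw [← mul_assoc, ← pow_add]
    rw [Even.neg_one_pow ⟨j, rfl⟩, one_mul]
  have hD : 0 < qfR r nn ^ 2 * qfR r (m - nn) := by positivity
  calc (0:ℝ) < ((-1 : ℝ) ^ j * qfR r (m + nn + 1)) / (qfR r nn ^ 2 * qfR r (m - nn)) :=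
        div_pos hs hD
    _ = ((-1 : ℝ) ^ ((r - 3) / 2) * (-1) ^ (m + nn) * (-1) ^ j) *
          (((-1 : ℝ) ^ j * qfR r (m + nn + 1)) / (qfR r nn ^ 2 * qfR r (m - nn))) := by
        rw [hone, one_mul]
    _ = (-1 : ℝ) ^ ((r - 3) / 2) *
          ((-1) ^ (m + nn) * qfR r (m + nn + 1) / (qfR r nn ^ 2 * qfR r (m - nn))) := by
        conv_rhs => rw [← htrick]
        ring
end
end
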